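/- arXiv:2104.08843 — 3 statements merged into one kernel-verified Lean document; each statement's English description precedes it below -/
import Mathlib

section
/- Let G be a torsion-free group acting as a convergence group on a compact metrizable space M, let γ ∈ G be a loxodromic element (an infinite-order element with exactly two fixed points x₁, x₂ in M), and let H = Stab_G({x₁, x₂}). Then H is dynamically malnormal: for all g ∈ G \ H, g·{x₁,x₂} ∩ {x₁,x₂} = ∅. -/
open Filter Topology Pointwise

set_option linter.unusedSectionVars false

def ConvergenceAction (G M : Type*) [Group G] [MetricSpace M] [MulAction G M] : Prop :=
  ∀ γ : ℕ → G, Function.Injective γ →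
    ∃ σ : ℕ → ℕ, StrictMono σ ∧ ∃ ξ η : M,
      ∀ K : Set M, IsCompact K → η ∉ K →
        TendstoUniformlyOn (fun n x => γ (σ n) • x) (fun _ => ξ) atTop K

namespace ConvergenceAux

variable {G M : Type*} [Group G] [MetricSpace M] [CompactSpace M] [MulAction G M]

def Col (k : ℕ → G) (ξ η : M) : Prop :=
  ∀ K : Set M, IsCompact K → η ∉ K →
    TendstoUniformlyOn (fun n x => k n • x) (fun _ => ξ) atTop K

theorem col_of_conv (hconv : ConvergenceAction G M) {c : ℕ → G} (hc : Function.Injective c) :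
    ∃ σ : ℕ → ℕ, StrictMono σ ∧ ∃ ξ η : M, Col (fun n => c (σ n)) ξ η := by
  obtain ⟨σ, hσ, ξ, η, h⟩ := hconv c hc
  exact ⟨σ, hσ, ξ, η, h⟩

theorem Col.comp {k : ℕ → G} {ξ η : M} (h : Col k ξ η) {σ : ℕ → ℕ} (hσ : StrictMono σ) :
    Col (fun n => k (σ n)) ξ η := by
  intro K hK hη
  have h2 := h K hK hη
  rw [Metric.tendstoUniformlyOn_iff] at h2 ⊢
  intro ε hε
  exact hσ.tendsto_atTop.eventually (h2 ε hε)

theorem Col.eval {k : ℕ → G} {ξ η : M} (h : Col k ξ η) {x : M} (hx : x ≠ η) :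
    Tendsto (fun n => k n • x) atTop (𝓝 ξ) := by
  have h2 := h {x} isCompact_singleton
    (by simp only [Set.mem_singleton_iff]; exact fun hh => hx hh.symm)
  exact h2.tendsto_at (Set.mem_singleton x)

theorem Col.evalMoving {k : ℕ → G} {ξ η : M} (h : Col k ξ η) {s : ℕ → M} {l : M}
    (hs : Tendsto s atTop (𝓝 l)) (hl : l ≠ η) :
    Tendsto (fun n => k n • s n) atTop (𝓝 ξ) := by
  have hd : 0 < dist l η := dist_pos.mpr hl
  have hr : 0 < dist l η / 2 := by positivity
  have hKc : IsCompact (Metric.closedBall l (dist l η / 2)) :=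
    Metric.isClosed_closedBall.isCompact
  have hηK : η ∉ Metric.closedBall l (dist l η / 2) := by
    simp only [Metric.mem_closedBall]
    intro hle
    rw [dist_comm] at hle
    linarith
  have h2 := h _ hKc hηK
  rw [Metric.tendstoUniformlyOn_iff] at h2
  rw [Metric.tendsto_atTop]
  intro ε hε
  have hev1 := h2 ε hε
  have hev2 : ∀ᶠ n in atTop, s n ∈ Metric.closedBall l (dist l η / 2) :=
    hs (Metric.closedBall_mem_nhds l hr)
  obtain ⟨N, hN⟩ := Filter.eventually_atTop.1 (hev1.and hev2)
  refine ⟨N, fun n hn => ?_⟩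
  obtain ⟨h1, h2'⟩ := hN n hn
  have := h1 (s n) h2'
  rw [dist_comm]
  exact this

theorem Col.fix_eq {k : ℕ → G} {ξ η : M} (h : Col k ξ η) {x : M}
    (hfix : ∀ n, k n • x = x) (hx : x ≠ η) : ξ = x := by
  have h1 := h.eval hx
  have heq : (fun n => k n • x) = fun _ => x := funext hfix
  rw [heq] at h1
  exact tendsto_nhds_unique h1 tendsto_const_nhds

theorem Col.invEval {k : ℕ → G} {ξ η : M} (h : Col k ξ η) {x : M} (hx : x ≠ ξ) :
    Tendsto (fun n => (k n)⁻¹ • x) atTop (𝓝 η) := by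
  by_contra hcon
  rw [Metric.tendsto_atTop] at hcon
  push_neg at hcon
  obtain ⟨ε, hε, hfreq⟩ := hcon
  have hfreq' : ∃ᶠ n in atTop, ε ≤ dist ((k n)⁻¹ • x) η := by
    rw [Filter.frequently_atTop]
    intro N
    obtain ⟨n, hn, hd⟩ := hfreq N
    exact ⟨n, hn, hd⟩
  obtain ⟨σ, hσ, hσp⟩ := Filter.extraction_of_frequently_atTop hfreq'
  obtain ⟨z, τ, hτ, hz⟩ := CompactSpace.tendsto_subseq (fun n => (k (σ n))⁻¹ • x)
  have hz' : Tendsto (fun j => (k (σ (τ j)))⁻¹ • x) atTop (𝓝 z) := hz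
  have hzη : z ≠ η := by
    have hge : ε ≤ dist z η := by
      have hT : Tendsto (fun j => dist ((k (σ (τ j)))⁻¹ • x) η) atTop (𝓝 (dist z η)) :=
        hz'.dist tendsto_const_nhds
      exact ge_of_tendsto hT (Filter.Eventually.of_forall (fun j => hσp (τ j)))
    intro h'
    rw [h'] at hge
    simp only [dist_self] at hge
    linarith
  have hcol2 : Col (fun j => k (σ (τ j))) ξ η := h.comp (hσ.comp hτ)
  have hfin := hcol2.evalMoving hz' hzη
  have heq : (fun j => k (σ (τ j)) • (k (σ (τ j)))⁻¹ • x) = fun _ => x := by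
    funext j
    exact smul_inv_smul _ _
  rw [heq] at hfin
  exact hx (tendsto_nhds_unique tendsto_const_nhds hfin)

theorem Col.compose {k₁ k₂ : ℕ → G} {ξ₁ η₁ ξ₂ η₂ : M} (h₁ : Col k₁ ξ₁ η₁) (h₂ : Col k₂ ξ₂ η₂)
    (hne : ξ₁ ≠ η₂) : Col (fun n => k₂ n * k₁ n) ξ₂ η₁ := by
  intro K hK hη
  rw [Metric.tendstoUniformlyOn_iff]
  intro ε hε
  have hd : 0 < dist ξ₁ η₂ := dist_pos.mpr hne
  have hr : 0 < dist ξ₁ η₂ / 2 := by positivity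
  have hKc : IsCompact (Metric.closedBall ξ₁ (dist ξ₁ η₂ / 2)) := Metric.isClosed_closedBall.isCompact
  have hηK : η₂ ∉ Metric.closedBall ξ₁ (dist ξ₁ η₂ / 2) := by
    simp only [Metric.mem_closedBall]
    intro hle
    rw [dist_comm] at hle
    linarith
  have H2 := Metric.tendstoUniformlyOn_iff.1 (h₂ _ hKc hηK) ε hε
  have H1 := Metric.tendstoUniformlyOn_iff.1 (h₁ K hK hη) (dist ξ₁ η₂ / 2) hr
  filter_upwards [H1, H2] with n hn1 hn2 x hx
  have hmem : k₁ n • x ∈ Metric.closedBall ξ₁ (dist ξ₁ η₂ / 2) := by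
    simp only [Metric.mem_closedBall]
    have := hn1 x hx
    rw [dist_comm]
    exact le_of_lt this
  have := hn2 _ hmem
  simpa [mul_smul] using this


theorem fix_pow {k : G} {p : M} (h : k • p = p) (n : ℕ) : k ^ n • p = p := by
  induction n with
  | zero => simp
  | succ n ih => rw [pow_succ, mul_smul, h, ih]

theorem fix_inv {k : G} {p : M} (h : k • p = p) : k⁻¹ • p = p := by
  conv_lhs => rw [← h]
  exact inv_smul_smul k p

theorem pow_inj_of_not_finOrder {k : G} (hk : ¬ IsOfFinOrder k) {i j : ℕ} (h : k ^ i = k ^ j) :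
    i = j := by
  by_contra hne
  wlog hij : i < j generalizing i j
  · exact this h.symm (Ne.symm hne) (by omega)
  apply hk
  rw [isOfFinOrder_iff_pow_eq_one]
  refine ⟨j - i, by omega, ?_⟩
  have h2 : k ^ i * k ^ (j - i) = k ^ i * 1 := by
    rw [mul_one, ← pow_add]
    rw [show i + (j - i) = j by omega]
    exact h.symm
  exact mul_left_cancel h2

theorem not_finOrder_pow {k : G} (hk : ¬ IsOfFinOrder k) {m : ℕ} (hm : 0 < m) :
    ¬ IsOfFinOrder (k ^ m) := by
  intro h
  apply hk
  rw [isOfFinOrder_iff_pow_eq_one] at h ⊢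
  obtain ⟨n, hn, h1⟩ := h
  exact ⟨m * n, by positivity, by rw [pow_mul]; exact h1⟩


theorem no_three_fixed (hconv : ConvergenceAction G M) {k : G} (hk : ¬ IsOfFinOrder k)
    {p q r : M} (hpq : p ≠ q) (hpr : p ≠ r) (hqr : q ≠ r)
    (hp : k • p = p) (hq : k • q = q) (hr : k • r = r) : False := by
  have hcinj : Function.Injective (fun n : ℕ => k ^ (n + 1)) := by
    intro i j hij
    have := pow_inj_of_not_finOrder hk hij
    omega
  obtain ⟨σ, hσ, ξ, η, hcol⟩ := col_of_conv hconv hcinj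
  have key : ∀ x y : M, x ≠ y → k • x = x → k • y = y → x ≠ η → y ≠ η → False := by
    intro x y hxy hx hy hxη hyη
    have h1 : ξ = x := hcol.fix_eq (fun n => fix_pow hx _) hxη
    have h2 : ξ = y := hcol.fix_eq (fun n => fix_pow hy _) hyη
    exact hxy (h1 ▸ h2)
  by_cases h1 : p = η
  · subst h1
    exact key q r hqr hq hr (Ne.symm hpq) (Ne.symm hpr)
  · by_cases h2 : q = η
    · subst h2
      exact key p r hpr hp hr hpq (Ne.symm hqr)
    · exact key p q hpq hp hq h1 h2

theorem pin_pair {k : ℕ → G} {ξ η : M} (h : Col k ξ η) {p q : M} (hpq : p ≠ q)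
    (hp : ∀ n, k n • p = p) (hq : ∀ n, k n • q = q) :
    (ξ = p ∧ η = q) ∨ (ξ = q ∧ η = p) := by
  by_cases h1 : η = q
  · left
    exact ⟨h.fix_eq hp (by rw [h1]; exact hpq), h1⟩
  · by_cases h2 : η = p
    · right
      exact ⟨h.fix_eq hq (by rw [h2]; exact hpq.symm), h2⟩
    · exfalso
      have e1 : ξ = p := h.fix_eq hp (fun hh => h2 hh.symm)
      have e2 : ξ = q := h.fix_eq hq (fun hh => h1 hh.symm)
      exact hpq (e1 ▸ e2)

theorem exists_oriented (hconv : ConvergenceAction G M) {k : G} (hk : ¬ IsOfFinOrder k)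
    {p q w : M} (hpq : p ≠ q) (hp : k • p = p) (hq : k • q = q)
    (hwp : w ≠ p) (hwq : w ≠ q) :
    ∃ ζ : G, ζ • p = p ∧ ζ • q = q ∧ ¬ IsOfFinOrder ζ ∧
      ∃ d : ℕ → ℕ, StrictMono d ∧ Col (fun j => ζ ^ d j) q p := by
  have hcinj : Function.Injective (fun n : ℕ => k ^ (n + 1)) := by
    intro i j hij
    have := pow_inj_of_not_finOrder hk hij
    omega
  obtain ⟨σ, hσ, ξ, η, hcol⟩ := col_of_conv hconv hcinj
  have hpin := pin_pair hcol hpq (fun n => fix_pow hp _) (fun n => fix_pow hq _)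
  rcases hpin with ⟨hξ, hη⟩ | ⟨hξ, hη⟩
  · -- (ξ, η) = (p, q) : wrong orientation, extract from inverses
    have hcolA : Col (fun n => k ^ (σ n + 1)) p q := by rw [← hξ, ← hη]; exact hcol
    have hcinj' : Function.Injective (fun n : ℕ => (k ^ (σ n + 1))⁻¹) := by
      intro i j hij
      simp only [inv_inj] at hij
      have := pow_inj_of_not_finOrder hk hij
      have := hσ.injective (by omega : σ i = σ j)
      exact this
    obtain ⟨σ', hσ', ξ', η', hcol'⟩ := col_of_conv hconv hcinj'
    have hfixp : ∀ n, (fun n : ℕ => (k ^ (σ n + 1))⁻¹) (σ' n) • p = p :=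
      fun n => fix_inv (fix_pow hp _)
    have hfixq : ∀ n, (fun n : ℕ => (k ^ (σ n + 1))⁻¹) (σ' n) • q = q :=
      fun n => fix_inv (fix_pow hq _)
    have hpin' := pin_pair hcol' hpq hfixp hfixq
    rcases hpin' with ⟨hξ', hη'⟩ | ⟨hξ', hη'⟩
    · -- both families attract p : contradiction
      exfalso
      have hcolA2 : Col (fun j => k ^ (σ (σ' j) + 1)) p q := hcolA.comp hσ'
      have hevA : Tendsto (fun j => k ^ (σ (σ' j) + 1) • w) atTop (𝓝 p) :=
        hcolA2.eval hwq
      have hcolB : Col (fun j => (k ^ (σ (σ' j) + 1))⁻¹) p q := by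
        rw [← hξ', ← hη']; exact hcol'
      have hevB := hcolB.invEval (x := w) hwp
      have heq : (fun j => ((k ^ (σ (σ' j) + 1))⁻¹)⁻¹ • w)
          = fun j => k ^ (σ (σ' j) + 1) • w := by
        funext j; rw [inv_inv]
      rw [heq] at hevB
      exact hpq (tendsto_nhds_unique hevA hevB)
    · -- inverse family attracts q : take ζ := k⁻¹
      refine ⟨k⁻¹, fix_inv hp, fix_inv hq, by
        rw [isOfFinOrder_inv_iff]; exact hk, fun j => σ (σ' j) + 1,
        ?_, ?_⟩
      · intro i j hij
        exact Nat.add_lt_add_right (hσ.comp hσ' hij) 1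
      · have : Col (fun j => (k ^ (σ (σ' j) + 1))⁻¹) q p := by
          rw [← hξ', ← hη']; exact hcol'
        have heq : (fun j => (k⁻¹) ^ (σ (σ' j) + 1)) = fun j => (k ^ (σ (σ' j) + 1))⁻¹ := by
          funext j; rw [inv_pow]
        rw [heq]
        exact this
  · -- (ξ, η) = (q, p) : done
    refine ⟨k, hp, hq, hk, fun n => σ n + 1, ?_, ?_⟩
    · intro i j hij
      exact Nat.add_lt_add_right (hσ hij) 1
    · have : Col (fun n => k ^ (σ n + 1)) q p := by rw [← hξ, ← hη]; exact hcol
      exact this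

theorem tendsto_of_subseq {u : ℕ → M} {l : M}
    (H : ∀ σ : ℕ → ℕ, StrictMono σ → ∃ τ : ℕ → ℕ, StrictMono τ ∧
        Tendsto (fun j => u (σ (τ j))) atTop (𝓝 l)) :
    Tendsto u atTop (𝓝 l) := by
  by_contra hcon
  rw [Metric.tendsto_atTop] at hcon
  push_neg at hcon
  obtain ⟨ε, hε, hfr⟩ := hcon
  have hfr' : ∃ᶠ n in atTop, ε ≤ dist (u n) l := by
    rw [Filter.frequently_atTop]
    intro N
    obtain ⟨n, hn, hd⟩ := hfr N
    exact ⟨n, hn, hd⟩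
  obtain ⟨σ, hσ, hpr⟩ := Filter.extraction_of_frequently_atTop hfr'
  obtain ⟨τ, hτ, hT⟩ := H σ hσ
  rw [Metric.tendsto_atTop] at hT
  obtain ⟨N, hN⟩ := hT ε hε
  exact absurd (hN N le_rfl) (not_lt.2 (hpr (τ N)))

theorem exists_strictmono_comp {μ : ℕ → ℕ} (hμ : Tendsto μ atTop atTop) :
    ∃ τ : ℕ → ℕ, StrictMono τ ∧ StrictMono (fun j => μ (τ j)) := by
  have key : ∀ n : ℕ, ∃ m, n < m ∧ μ n < μ m := by
    intro n
    have h1 : ∀ᶠ m in atTop, μ n < μ m := hμ.eventually_gt_atTop (μ n)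
    have h2 : ∀ᶠ m in atTop, n < m := Filter.eventually_gt_atTop n
    obtain ⟨m, hm1, hm2⟩ := (h1.and h2).exists
    exact ⟨m, hm2, hm1⟩
  choose next hn1 hn2 using key
  refine ⟨fun j => Nat.rec 0 (fun _ prev => next prev) j,
    strictMono_nat_of_lt_succ (fun n => hn1 _),
    strictMono_nat_of_lt_succ (fun n => hn2 _)⟩

theorem mixed_inj (hconv : ConvergenceAction G M) {φ ζ : G} {a b c : M}
    (hab : a ≠ b) (hac : a ≠ c) (hbc : b ≠ c)
    (hφa : φ • a = a) (hφb : φ • b = b) (hζa : ζ • a = a) (hζc : ζ • c = c)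
    (hζord : ¬ IsOfFinOrder ζ)
    {x y u v : ℕ} (huv : u ≠ v) (h : φ ^ x * ζ ^ u = φ ^ y * ζ ^ v) : False := by
  have hk : (φ ^ y)⁻¹ * φ ^ x = ζ ^ v * (ζ ^ u)⁻¹ := by
    apply mul_right_cancel (b := ζ ^ u)
    rw [mul_assoc, h, inv_mul_cancel_left, mul_assoc, inv_mul_cancel, mul_one]
  have hka : (ζ ^ v * (ζ ^ u)⁻¹) • a = a := by
    rw [mul_smul, fix_inv (fix_pow hζa u), fix_pow hζa v]
  have hkc : (ζ ^ v * (ζ ^ u)⁻¹) • c = c := by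
    rw [mul_smul, fix_inv (fix_pow hζc u), fix_pow hζc v]
  have hkb : (ζ ^ v * (ζ ^ u)⁻¹) • b = b := by
    rw [← hk, mul_smul, fix_pow hφb x, fix_inv (fix_pow hφb y)]
  have hkord : ¬ IsOfFinOrder (ζ ^ v * (ζ ^ u)⁻¹) := by
    rcases Nat.lt_or_ge u v with hlt | hge
    · have hkeq : ζ ^ v * (ζ ^ u)⁻¹ = ζ ^ (v - u) := by
        apply mul_right_cancel (b := ζ ^ u)
        rw [mul_assoc, inv_mul_cancel, mul_one, ← pow_add]
        congr 1
        omega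
      rw [hkeq]
      exact not_finOrder_pow hζord (by omega)
    · have hvu : v < u := by omega
      have hkeq : ζ ^ v * (ζ ^ u)⁻¹ = (ζ ^ (u - v))⁻¹ := by
        apply mul_left_cancel (a := ζ ^ (u - v))
        rw [← mul_assoc, ← pow_add, show u - v + v = u by omega, mul_inv_cancel,
          mul_inv_cancel]
      rw [hkeq, isOfFinOrder_inv_iff]
      exact not_finOrder_pow hζord (by omega)
  exact no_three_fixed hconv hkord hab hac hbc hka hkb hkc

theorem stepA (hconv : ConvergenceAction G M) {ζ φ : G} {a b c u₀ : M} {d : ℕ → ℕ}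
    (hd : StrictMono d) (hE : Col (fun j => ζ ^ d j) a c)
    (hζa : ζ • a = a) (hζord : ¬ IsOfFinOrder ζ)
    (hφa : φ • a = a)
    (hba : b ≠ a) (hbu : b ≠ u₀) (hu₀a : u₀ ≠ a) (hu₀c : u₀ ≠ c) (hac : a ≠ c)
    (m : ℕ) :
    Tendsto (fun j => φ ^ m • ζ ^ d j • u₀) atTop (𝓝 a) := by
  apply tendsto_of_subseq
  intro σ hσ
  have hcinj : Function.Injective fun j => φ ^ m * ζ ^ d (σ j) := by
    intro i j hij
    simp only at hij
    have h2 := mul_left_cancel hij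
    exact hσ.injective (hd.injective (pow_inj_of_not_finOrder hζord h2))
  obtain ⟨τ, hτ, ξ, η, hcol⟩ := col_of_conv hconv hcinj
  have hfixa : ∀ j, (φ ^ m * ζ ^ d (σ (τ j))) • a = a := by
    intro j
    rw [mul_smul, fix_pow hζa, fix_pow hφa]
  by_cases hη : η = c
  · have hξ : ξ = a := hcol.fix_eq hfixa (by rw [hη]; exact hac)
    refine ⟨τ, hτ, ?_⟩
    have hev := hcol.eval (x := u₀) (by rw [hη]; exact hu₀c)
    rw [hξ] at hev
    have heq : (fun n => (φ ^ m * ζ ^ d (σ (τ n))) • u₀)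
        = fun n => φ ^ m • ζ ^ d (σ (τ n)) • u₀ := by
      funext n
      rw [mul_smul]
    rw [heq] at hev
    exact hev
  · exfalso
    have hEc : Col (fun j => ζ ^ d (σ (τ j))) a c := hE.comp (hσ.comp hτ)
    have hs1 : Tendsto (fun j => (ζ ^ d (σ (τ j)))⁻¹ • b) atTop (𝓝 c) := hEc.invEval hba
    have hs2 : Tendsto (fun j => (ζ ^ d (σ (τ j)))⁻¹ • u₀) atTop (𝓝 c) := hEc.invEval hu₀a
    have hcη : c ≠ η := fun hh => hη hh.symm
    have he1 := hcol.evalMoving hs1 hcη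
    have he2 := hcol.evalMoving hs2 hcη
    have heq1 : (fun j => (φ ^ m * ζ ^ d (σ (τ j))) • (ζ ^ d (σ (τ j)))⁻¹ • b)
        = fun _ => φ ^ m • b := by
      funext j
      rw [mul_smul, smul_inv_smul]
    have heq2 : (fun j => (φ ^ m * ζ ^ d (σ (τ j))) • (ζ ^ d (σ (τ j)))⁻¹ • u₀)
        = fun _ => φ ^ m • u₀ := by
      funext j
      rw [mul_smul, smul_inv_smul]
    rw [heq1] at he1
    rw [heq2] at he2
    have e1 : φ ^ m • b = ξ := tendsto_nhds_unique tendsto_const_nhds he1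
    have e2 : φ ^ m • u₀ = ξ := tendsto_nhds_unique tendsto_const_nhds he2
    exact hbu (smul_left_cancel _ (e1.trans e2.symm))

theorem phase2 (hconv : ConvergenceAction G M) {φ ζ : G} {a b c u₀ : M} {μe de : ℕ → ℕ}
    (hab : a ≠ b) (hac : a ≠ c) (hbc : b ≠ c)
    (hu₀a : u₀ ≠ a) (hu₀b : u₀ ≠ b) (hu₀c : u₀ ≠ c)
    (hφa : φ • a = a) (hφb : φ • b = b) (hφord : ¬ IsOfFinOrder φ)
    (hζa : ζ • a = a) (hζc : ζ • c = c) (hζord : ¬ IsOfFinOrder ζ)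
    (hμ1 : ∀ j, 1 ≤ μe j) (hμmono : StrictMono μe) (hde : StrictMono de)
    (hcolΦ : Col (fun j => φ ^ μe j) b a)
    (hEcol : Col (fun j => ζ ^ de j) a c)
    (hwρ : ∀ j, dist a b / 2 ≤ dist (φ ^ μe j • ζ ^ de j • u₀) a)
    (hvρ : ∀ j, dist (φ ^ (μe j - 1) • ζ ^ de j • u₀) a < dist a b / 2) : False := by
  have hδ : 0 < dist a b / 2 := by have := dist_pos.mpr hab; positivity
  -- Step F : orientation of the (μe - 1)-power family, producing an (a,c)-collapse for R
  have hinjF : Function.Injective fun j => φ ^ (μe j - 1) := by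
    intro i j h
    have h2 := pow_inj_of_not_finOrder hφord h
    have h3 : μe i = μe j := by have := hμ1 i; have := hμ1 j; omega
    exact hμmono.injective h3
  obtain ⟨σ₂, hσ₂, ξ₂, η₂, hcol₂⟩ := col_of_conv hconv hinjF
  have hpin₂ := pin_pair hcol₂ hab (fun n => fix_pow hφa _) (fun n => fix_pow hφb _)
  have hcolRex : ∃ σR : ℕ → ℕ, StrictMono σR ∧
      Col (fun j => φ ^ (μe (σ₂ (σR j)) - 1) * ζ ^ de (σ₂ (σR j))) a c := by
    rcases hpin₂ with ⟨hξ₂, hη₂⟩ | ⟨hξ₂, hη₂⟩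
    · refine ⟨fun j => j, strictMono_id, ?_⟩
      have houter : Col (fun j => φ ^ (μe (σ₂ j) - 1)) a b := by
        rw [← hξ₂, ← hη₂]; exact hcol₂
      have hinner : Col (fun j => ζ ^ de (σ₂ j)) a c := hEcol.comp hσ₂
      exact Col.compose hinner houter hab
    · have houter : Col (fun j => φ ^ (μe (σ₂ j) - 1)) b a := by
        rw [← hξ₂, ← hη₂]; exact hcol₂
      have hinjR : Function.Injective fun j => φ ^ (μe (σ₂ j) - 1) * ζ ^ de (σ₂ j) := by
        intro i j h
        by_contra hne'
        have hde' : de (σ₂ i) ≠ de (σ₂ j) :=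
          fun hh => hne' (hσ₂.injective (hde.injective hh))
        exact mixed_inj hconv hab hac hbc hφa hφb hζa hζc hζord hde' h
      obtain ⟨σ₃, hσ₃, ξ₃, η₃, hcol₃⟩ := col_of_conv hconv hinjR
      have hfixa : ∀ n, (φ ^ (μe (σ₂ (σ₃ n)) - 1) * ζ ^ de (σ₂ (σ₃ n))) • a = a := by
        intro n; rw [mul_smul, fix_pow hζa, fix_pow hφa]
      have hRc : Tendsto (fun n => (φ ^ (μe (σ₂ (σ₃ n)) - 1) * ζ ^ de (σ₂ (σ₃ n))) • c)
          atTop (𝓝 b) := by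
        have heq : (fun n => (φ ^ (μe (σ₂ (σ₃ n)) - 1) * ζ ^ de (σ₂ (σ₃ n))) • c)
            = fun n => φ ^ (μe (σ₂ (σ₃ n)) - 1) • c := by
          funext n; rw [mul_smul, fix_pow hζc]
        rw [heq]
        exact (houter.comp hσ₃).eval (Ne.symm hac)
      by_cases hη₃c : η₃ = c
      · have hξ₃ : ξ₃ = a := hcol₃.fix_eq hfixa (by rw [hη₃c]; exact hac)
        exact ⟨σ₃, hσ₃, by rw [← hξ₃, ← hη₃c]; exact hcol₃⟩
      · exfalso
        have hξ₃b : ξ₃ = b :=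
          tendsto_nhds_unique (hcol₃.eval (x := c) (fun hh => hη₃c hh.symm)) hRc
        by_cases hη₃a : η₃ = a
        · have hu := hcol₃.eval (x := u₀) (by rw [hη₃a]; exact hu₀a)
          rw [hξ₃b] at hu
          have heq : (fun n => (φ ^ (μe (σ₂ (σ₃ n)) - 1) * ζ ^ de (σ₂ (σ₃ n))) • u₀)
              = fun n => φ ^ (μe (σ₂ (σ₃ n)) - 1) • ζ ^ de (σ₂ (σ₃ n)) • u₀ := by
            funext n; rw [mul_smul]
          rw [heq] at hu
          rw [Metric.tendsto_atTop] at hu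
          obtain ⟨N, hN⟩ := hu _ hδ
          have h1 := hN N le_rfl
          have h2 := hvρ (σ₂ (σ₃ N))
          have htri := dist_triangle a (φ ^ (μe (σ₂ (σ₃ N)) - 1) • ζ ^ de (σ₂ (σ₃ N)) • u₀) b
          have hd1 : dist a (φ ^ (μe (σ₂ (σ₃ N)) - 1) • ζ ^ de (σ₂ (σ₃ N)) • u₀)
              = dist (φ ^ (μe (σ₂ (σ₃ N)) - 1) • ζ ^ de (σ₂ (σ₃ N)) • u₀) a := dist_comm _ _
          linarith
        · have hξ₃a : ξ₃ = a := hcol₃.fix_eq hfixa (fun hh => hη₃a hh.symm)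
          exact hab (hξ₃a ▸ hξ₃b)
  obtain ⟨σR, hσR, hcolR⟩ := hcolRex
  have hcolΦπ : Col (fun j => φ ^ μe (σ₂ (σR j))) b a := hcolΦ.comp (hσ₂.comp hσR)
  -- Step G : the Q family
  have hinjQ : Function.Injective fun j => φ ^ μe (σ₂ (σR j)) * ζ ^ de (σ₂ (σR j)) := by
    intro i j h
    by_contra hne'
    have hde' : de (σ₂ (σR i)) ≠ de (σ₂ (σR j)) :=
      fun hh => hne' (hσR.injective (hσ₂.injective (hde.injective hh)))
    exact mixed_inj hconv hab hac hbc hφa hφb hζa hζc hζord hde' h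
  obtain ⟨σ₄, hσ₄, ξ₄, η₄, hcol₄⟩ := col_of_conv hconv hinjQ
  have hfixQa : ∀ n, (φ ^ μe (σ₂ (σR (σ₄ n))) * ζ ^ de (σ₂ (σR (σ₄ n)))) • a = a := by
    intro n; rw [mul_smul, fix_pow hζa, fix_pow hφa]
  have hQc : Tendsto (fun n => (φ ^ μe (σ₂ (σR (σ₄ n))) * ζ ^ de (σ₂ (σR (σ₄ n)))) • c)
      atTop (𝓝 b) := by
    have heq : (fun n => (φ ^ μe (σ₂ (σR (σ₄ n))) * ζ ^ de (σ₂ (σR (σ₄ n)))) • c)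
        = fun n => φ ^ μe (σ₂ (σR (σ₄ n))) • c := by
      funext n; rw [mul_smul, fix_pow hζc]
    rw [heq]
    exact (hcolΦπ.comp hσ₄).eval (Ne.symm hac)
  by_cases hη₄c : η₄ = c
  · have hξ₄ : ξ₄ = a := hcol₄.fix_eq hfixQa (by rw [hη₄c]; exact hac)
    have hu := hcol₄.eval (x := u₀) (by rw [hη₄c]; exact hu₀c)
    rw [hξ₄] at hu
    have heq : (fun n => (φ ^ μe (σ₂ (σR (σ₄ n))) * ζ ^ de (σ₂ (σR (σ₄ n)))) • u₀)
        = fun n => φ ^ μe (σ₂ (σR (σ₄ n))) • ζ ^ de (σ₂ (σR (σ₄ n))) • u₀ := by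
      funext n; rw [mul_smul]
    rw [heq] at hu
    rw [Metric.tendsto_atTop] at hu
    obtain ⟨N, hN⟩ := hu _ hδ
    exact absurd (hN N le_rfl) (not_lt.2 (hwρ (σ₂ (σR (σ₄ N)))))
  · by_cases hη₄a : η₄ = a
    · have hξ₄b : ξ₄ = b :=
        tendsto_nhds_unique (hcol₄.eval (x := c) (fun hh => hη₄c hh.symm)) hQc
      have hcolQ : Col (fun n => φ ^ μe (σ₂ (σR (σ₄ n))) * ζ ^ de (σ₂ (σR (σ₄ n)))) b a := by
        rw [← hξ₄b, ← hη₄a]; exact hcol₄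
      have hcolR₅ : Col (fun n => φ ^ (μe (σ₂ (σR (σ₄ n))) - 1) * ζ ^ de (σ₂ (σR (σ₄ n)))) a c :=
        hcolR.comp hσ₄
      have hQinv := hcolQ.invEval (x := u₀) hu₀b
      have hy : φ⁻¹ • u₀ ≠ a := by
        intro h
        apply hu₀a
        have h2 := congrArg (fun z => φ • z) h
        simpa [smul_inv_smul, hφa] using h2
      have hRinv := hcolR₅.invEval (x := φ⁻¹ • u₀) hy
      have heq : (fun n => (φ ^ μe (σ₂ (σR (σ₄ n))) * ζ ^ de (σ₂ (σR (σ₄ n))))⁻¹ • u₀)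
          = fun n => (φ ^ (μe (σ₂ (σR (σ₄ n))) - 1) * ζ ^ de (σ₂ (σR (σ₄ n))))⁻¹ • φ⁻¹ • u₀ := by
        funext n
        rw [mul_inv_rev, mul_inv_rev, mul_smul, mul_smul]
        congr 1
        rw [← mul_smul]
        congr 1
        rw [← mul_inv_rev]
        congr 1
        rw [← pow_succ']
        congr 1
        have := hμ1 (σ₂ (σR (σ₄ n)))
        omega
      rw [heq] at hQinv
      exact hac (tendsto_nhds_unique hQinv hRinv)
    · have hξ₄a : ξ₄ = a := hcol₄.fix_eq hfixQa (fun hh => hη₄a hh.symm)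
      have hξ₄b : ξ₄ = b :=
        tendsto_nhds_unique (hcol₄.eval (x := c) (fun hh => hη₄c hh.symm)) hQc
      exact hab (hξ₄a ▸ hξ₄b)

theorem main_contra (hconv : ConvergenceAction G M) {φ ζ : G} {a b c u₀ : M}
    (hab : a ≠ b) (hac : a ≠ c) (hbc : b ≠ c)
    (hu₀a : u₀ ≠ a) (hu₀b : u₀ ≠ b) (hu₀c : u₀ ≠ c)
    (hφa : φ • a = a) (hφb : φ • b = b) (hφord : ¬ IsOfFinOrder φ)
    (hζa : ζ • a = a) (hζc : ζ • c = c) (hζord : ¬ IsOfFinOrder ζ)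
    {s : ℕ → ℕ} (hs : StrictMono s) (hφcol : Col (fun m => φ ^ s m) b a)
    {d : ℕ → ℕ} (hd : StrictMono d) (hEcol : Col (fun j => ζ ^ d j) a c) : False := by
  classical
  have hδ : 0 < dist a b / 2 := by have := dist_pos.mpr hab; positivity
  have hXa : ∀ j : ℕ, ζ ^ d j • u₀ ≠ a := by
    intro j h
    apply hu₀a
    have h2 := congrArg (fun z => (ζ ^ d j)⁻¹ • z) h
    simpa [inv_smul_smul, fix_inv (fix_pow hζa (d j))] using h2
  have hA : ∀ m : ℕ, Tendsto (fun j => φ ^ m • ζ ^ d j • u₀) atTop (𝓝 a) :=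
    fun m => stepA hconv hd hEcol hζa hζord hφa (Ne.symm hab) (Ne.symm hu₀b) hu₀a hu₀c hac m
  have hex : ∀ j : ℕ, ∃ m : ℕ, dist a b / 2 ≤ dist (φ ^ (m + 1) • ζ ^ d j • u₀) a := by
    intro j
    have hT : Tendsto (fun i => φ ^ s i • ζ ^ d j • u₀) atTop (𝓝 b) := hφcol.eval (hXa j)
    rw [Metric.tendsto_atTop] at hT
    obtain ⟨N, hN⟩ := hT (dist a b / 2) hδ
    have hi : dist (φ ^ s (max N 1) • ζ ^ d j • u₀) b < dist a b / 2 :=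
      hN _ (le_max_left _ _)
    have hs1 : 1 ≤ s (max N 1) := le_trans (le_max_right N 1) hs.le_apply
    refine ⟨s (max N 1) - 1, ?_⟩
    rw [show s (max N 1) - 1 + 1 = s (max N 1) by omega]
    have htri := dist_triangle a (φ ^ s (max N 1) • ζ ^ d j • u₀) b
    have hcm : dist a (φ ^ s (max N 1) • ζ ^ d j • u₀)
        = dist (φ ^ s (max N 1) • ζ ^ d j • u₀) a := dist_comm _ _
    linarith
  obtain ⟨μ, hμdef⟩ : ∃ μ : ℕ → ℕ, ∀ j, μ j = Nat.find (hex j) + 1 := ⟨_, fun j => rfl⟩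
  have hμ1 : ∀ j, 1 ≤ μ j := fun j => by rw [hμdef]; omega
  have hw : ∀ j, dist a b / 2 ≤ dist (φ ^ μ j • ζ ^ d j • u₀) a := by
    intro j
    rw [hμdef]
    exact Nat.find_spec (hex j)
  have hv : ∀ j, dist (ζ ^ d j • u₀) a < dist a b / 2 →
      dist (φ ^ (μ j - 1) • ζ ^ d j • u₀) a < dist a b / 2 := by
    intro j hj
    rcases Nat.eq_zero_or_pos (Nat.find (hex j)) with h0 | hpos
    · have h1 : μ j - 1 = 0 := by rw [hμdef, h0]
      rw [h1]
      simpa using hj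
    · have hmin := Nat.find_min (hex j) (m := Nat.find (hex j) - 1) (by omega)
      push_neg at hmin
      have hrw : μ j - 1 = (Nat.find (hex j) - 1) + 1 := by rw [hμdef]; omega
      rw [hrw]
      exact hmin
  have hsmall : ∀ m : ℕ, ∀ᶠ j in atTop,
      dist (φ ^ m • ζ ^ d j • u₀) a < dist a b / 2 := by
    intro m
    have h1 := hA m
    rw [Metric.tendsto_atTop] at h1
    obtain ⟨N, hN⟩ := h1 _ hδ
    exact Filter.eventually_atTop.2 ⟨N, fun j hj => hN j hj⟩
  have hall : ∀ m₀ : ℕ, ∀ᶠ j in atTop, ∀ m ≤ m₀,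
      dist (φ ^ m • ζ ^ d j • u₀) a < dist a b / 2 := by
    intro m₀
    induction m₀ with
    | zero =>
      exact (hsmall 0).mono (fun j hj m hm => by rw [Nat.le_zero.mp hm]; exact hj)
    | succ n ih =>
      filter_upwards [ih, hsmall (n + 1)] with j h1 h2 m hm
      rcases Nat.lt_or_ge m (n + 1) with h | h
      · exact h1 m (by omega)
      · rw [show m = n + 1 by omega]
        exact h2
  have hμtop : Tendsto μ atTop atTop := by
    rw [Filter.tendsto_atTop]
    intro m₀
    filter_upwards [hall (m₀ + 1)] with j hj
    by_contra hlt
    push_neg at hlt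
    rw [hμdef] at hlt
    have hspec := Nat.find_spec (hex j)
    have h2 := hj (Nat.find (hex j) + 1) (by omega)
    linarith
  have hX0T : Tendsto (fun j => ζ ^ d j • u₀) atTop (𝓝 a) := by
    have h0 := hA 0
    simpa using h0
  obtain ⟨J₀, hJ₀⟩ := Metric.tendsto_atTop.1 hX0T _ hδ
  have hshift : StrictMono (fun j : ℕ => j + J₀) := fun i j h => Nat.add_lt_add_right h J₀
  have hμtop' : Tendsto (fun j => μ (j + J₀)) atTop atTop := hμtop.comp hshift.tendsto_atTop
  obtain ⟨τ₁, hτ₁, hμmono⟩ := exists_strictmono_comp hμtop'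
  have hρ : StrictMono (fun j => τ₁ j + J₀) := fun i j h => Nat.add_lt_add_right (hτ₁ h) J₀
  -- Step E : orientation of the μ-power family
  have hinjE : Function.Injective fun j => φ ^ μ (τ₁ j + J₀) := by
    intro i j h
    exact hμmono.injective (pow_inj_of_not_finOrder hφord h)
  obtain ⟨σ₁, hσ₁, ξ₁, η₁, hcol₁⟩ := col_of_conv hconv hinjE
  have hpin₁ := pin_pair hcol₁ hab (fun n => fix_pow hφa _) (fun n => fix_pow hφb _)
  have hcompρ : StrictMono (fun j => τ₁ (σ₁ j) + J₀) :=
    fun i j h => Nat.add_lt_add_right (hτ₁ (hσ₁ h)) J₀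
  have hXρ1 : Tendsto (fun j => ζ ^ d (τ₁ (σ₁ j) + J₀) • u₀) atTop (𝓝 a) :=
    hX0T.comp hcompρ.tendsto_atTop
  rcases hpin₁ with ⟨hξ₁, hη₁⟩ | ⟨hξ₁, hη₁⟩
  · -- wrong orientation is impossible thanks to the exit values
    have hmv := hcol₁.evalMoving (s := fun j => ζ ^ d (τ₁ (σ₁ j) + J₀) • u₀) hXρ1
      (by rw [hη₁]; exact hab)
    rw [hξ₁] at hmv
    rw [Metric.tendsto_atTop] at hmv
    obtain ⟨N, hN⟩ := hmv _ hδ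
    exact absurd (hN N le_rfl) (not_lt.2 (hw (τ₁ (σ₁ N) + J₀)))
  · have hcolΦ : Col (fun j => φ ^ μ (τ₁ (σ₁ j) + J₀)) b a := by
      rw [← hξ₁, ← hη₁]; exact hcol₁
    refine phase2 (μe := fun j => μ (τ₁ (σ₁ j) + J₀)) (de := fun j => d (τ₁ (σ₁ j) + J₀))
      hconv hab hac hbc hu₀a hu₀b hu₀c hφa hφb hφord hζa hζc hζord
      (fun j => hμ1 _) (hμmono.comp hσ₁) (fun i j h => hd (hcompρ h))
      hcolΦ (hEcol.comp hcompρ) (fun j => hw _) (fun j => hv _ (hJ₀ _ (by omega)))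

end ConvergenceAux

/-- Let `G` be torsion-free, acting as a convergence group on a compact metrizable space
`M`, let `γ` be a loxodromic element with fixed point set `{x₁, x₂}`, and let
`H = Stab_G({x₁,x₂})`. Then `H` is dynamically malnormal: for all `g ∉ H`,
`g • {x₁,x₂} ∩ {x₁,x₂} = ∅`. -/
theorem stabilizer_of_loxodromic_dynamically_malnormal
    (G M : Type*) [Group G] [MetricSpace M] [CompactSpace M] [MulAction G M]
    (htf : ∀ g : G, g ≠ 1 → ¬ IsOfFinOrder g)
    (hconv : ConvergenceAction G M)
    (γ : G) (x₁ x₂ : M) (hne : x₁ ≠ x₂)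
    (hγord : ¬ IsOfFinOrder γ)
    (hfix : {z : M | γ • z = z} = {x₁, x₂})
    (H : Subgroup G) (hH : H = MulAction.stabilizer G ({x₁, x₂} : Set M)) :
    ∀ g : G, g ∉ H → g • ({x₁, x₂} : Set M) ∩ {x₁, x₂} = ∅ := by
  intro g hg
  by_contra hcon
  obtain ⟨p, hpg, hpS⟩ := Set.nonempty_iff_ne_empty.2 hcon
  obtain ⟨y, hyS, hyp⟩ := Set.mem_smul_set.1 hpg
  -- the other element of {x₁, x₂} relative to p
  have hpS' : p = x₁ ∨ p = x₂ := by
    simpa [Set.mem_insert_iff, Set.mem_singleton_iff] using hpS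
  have hyS' : y = x₁ ∨ y = x₂ := by
    simpa [Set.mem_insert_iff, Set.mem_singleton_iff] using hyS
  obtain ⟨b, hpb, hSb⟩ : ∃ b : M, p ≠ b ∧ ({x₁, x₂} : Set M) = {p, b} := by
    rcases hpS' with h | h
    · exact ⟨x₂, by rw [h]; exact hne, by rw [h]⟩
    · exact ⟨x₁, by rw [h]; exact hne.symm, by rw [h]; exact Set.pair_comm x₁ x₂⟩
  obtain ⟨y', hyy', hSy⟩ : ∃ y' : M, y ≠ y' ∧ ({x₁, x₂} : Set M) = {y, y'} := by
    rcases hyS' with h | h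
    · exact ⟨x₂, by rw [h]; exact hne, by rw [h]⟩
    · exact ⟨x₁, by rw [h]; exact hne.symm, by rw [h]; exact Set.pair_comm x₁ x₂⟩
  have hgS : g • ({x₁, x₂} : Set M) = {p, g • y'} := by
    rw [hSy, Set.smul_set_insert, Set.smul_set_singleton, hyp]
  have hpc : p ≠ g • y' := by
    rw [← hyp]
    intro h
    exact hyy' (MulAction.injective g h)
  have hcb : g • y' ≠ b := by
    intro h
    apply hg
    rw [hH, MulAction.mem_stabilizer_iff, hgS, h, ← hSb]
  have hbc : b ≠ g • y' := fun h => hcb h.symm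
  have hfixmem : ∀ z, z ∈ ({x₁, x₂} : Set M) → γ • z = z := by
    intro z hz
    have h2 : z ∈ {z : M | γ • z = z} := by rw [hfix]; exact hz
    exact h2
  have hγp : γ • p = p := hfixmem p hpS
  have hγb : γ • b = b :=
    hfixmem b (by rw [hSb]; exact Set.mem_insert_of_mem _ rfl)
  have he_iff : ∀ z : M, (g * γ * g⁻¹) • z = z ↔ γ • (g⁻¹ • z) = g⁻¹ • z := by
    intro z
    constructor
    · intro h
      rw [mul_smul, mul_smul] at h
      have h2 := congrArg (fun w => g⁻¹ • w) h
      simpa [inv_smul_smul] using h2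
    · intro h
      rw [mul_smul, mul_smul, h, smul_inv_smul]
  have hep : (g * γ * g⁻¹) • p = p := by
    rw [he_iff]
    have h2 : g⁻¹ • p = y := by rw [← hyp, inv_smul_smul]
    rw [h2]
    exact hfixmem y hyS
  have hec : (g * γ * g⁻¹) • (g • y') = g • y' := by
    rw [he_iff, inv_smul_smul]
    exact hfixmem y' (by rw [hSy]; exact Set.mem_insert_of_mem _ rfl)
  have he_ord : ¬ IsOfFinOrder (g * γ * g⁻¹) := by
    intro h
    apply hγord
    rw [isOfFinOrder_iff_pow_eq_one] at h ⊢
    have hconj : ∀ n : ℕ, (g * γ * g⁻¹) ^ n = g * γ ^ n * g⁻¹ := by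
      intro n
      induction n with
      | zero => simp
      | succ k ih => rw [pow_succ, ih, pow_succ]; group
    obtain ⟨n, hn, hpow⟩ := h
    refine ⟨n, hn, ?_⟩
    rw [hconj] at hpow
    calc γ ^ n = g⁻¹ * (g * γ ^ n * g⁻¹) * g := by group
    _ = g⁻¹ * 1 * g := by rw [hpow]
    _ = 1 := by group
  -- u₀ := e • b and its non-degeneracies
  have hub : (g * γ * g⁻¹) • b ≠ b := by
    intro h
    have h2 : γ • (g⁻¹ • b) = g⁻¹ • b := (he_iff b).1 h
    have h3 : g⁻¹ • b ∈ {z : M | γ • z = z} := h2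
    rw [hfix] at h3
    have h4 : b ∈ g • ({x₁, x₂} : Set M) := by
      rw [Set.mem_smul_set_iff_inv_smul_mem]
      exact h3
    rw [hgS] at h4
    have h5 : b = p ∨ b = g • y' := by
      simpa [Set.mem_insert_iff, Set.mem_singleton_iff] using h4
    rcases h5 with h6 | h6
    · exact hpb h6.symm
    · exact hcb h6.symm
  have hua : (g * γ * g⁻¹) • b ≠ p := by
    intro h
    have h4 : (g * γ * g⁻¹)⁻¹ • ((g * γ * g⁻¹) • b) = (g * γ * g⁻¹)⁻¹ • p := by rw [h]
    rw [inv_smul_smul, ConvergenceAux.fix_inv hep] at h4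
    exact hpb h4.symm
  have huc : (g * γ * g⁻¹) • b ≠ g • y' := by
    intro h
    have h4 : (g * γ * g⁻¹)⁻¹ • ((g * γ * g⁻¹) • b) = (g * γ * g⁻¹)⁻¹ • (g • y') := by rw [h]
    rw [inv_smul_smul, ConvergenceAux.fix_inv hec] at h4
    exact hcb h4.symm
  obtain ⟨φ, hφp, hφb, hφord, s, hs, hφcol⟩ :=
    ConvergenceAux.exists_oriented hconv hγord hpb hγp hγb (Ne.symm hpc) hcb
  obtain ⟨ζ, hζc, hζp, hζord, d, hd, hζcol⟩ :=
    ConvergenceAux.exists_oriented hconv he_ord (Ne.symm hpc) hec hep hbc hpb.symm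
  exact ConvergenceAux.main_contra hconv hpb hpc hbc hua hub huc hφp hφb hφord hζp hζc hζord
    hs hφcol hd hζcol
end

section
/- Let G act on a compact metrizable space M as a convergence group and let H be a subgroup of G with limit set ΛH. Then H is dynamically quasi-convex (for all disjoint closed subsets K, L of M, the set {gH ∈ G/H : gΛH ∩ K ≠ ∅ and gΛH ∩ L ≠ ∅} is finite) if and only if for every sequence (g_n) lying in pairwise distinct left cosets of H there is a subsequence (g_{σ(n)}) such that g_{σ(n)}·ΛH converges uniformly to a single point of M. -/
/-! Pass to a subsequence on which the convergence action sends every `x ≠ η` to `ξ`. If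
`ΛH ⊆ {η}` the translates are points, and compactness gives a convergent subsequence. Otherwise
some point of `γₙ • ΛH` tends to `ξ`. For `q ≠ ξ` take disjoint closed neighbourhoods `K ∋ ξ` and
`L ∋ q`: only finitely many cosets meet both, so eventually the translates miss `L`; covering the
compact complement of a neighbourhood of `ξ` by finitely many such `L` shows that the translates
shrink to `ξ`. Conversely, translates shrinking to `p` eventually miss whichever of two disjoint
closed sets avoids `p`. -/

open Filter Topology Pointwise

def IsLimitSet {G : Type*} (M : Type*) [Group G] [MetricSpace M] [MulAction G M]
    (P : Subgroup G) (Λ : Set M) : Prop :=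
  Λ.Nonempty ∧ IsClosed Λ ∧ (∀ g ∈ P, ∀ x ∈ Λ, g • x ∈ Λ) ∧
    ∀ Λ' : Set M, Λ'.Nonempty → IsClosed Λ' → (∀ g ∈ P, ∀ x ∈ Λ', g • x ∈ Λ') → Λ' ⊆ Λ →
      Λ' = Λ

open Function

theorem Set.Infinite.exists_seq_mem_injective_comp {α β : Type*} {f : α → β} {T : Set α}
    (h : (f '' T).Infinite) : ∃ u : ℕ → α, (∀ n, u n ∈ T) ∧ Injective (f ∘ u) := by
  choose u huT hfu using fun n => (h.natEmbedding _ n).2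
  exact ⟨u, huT, fun m n hmn => h.natEmbedding.injective (Subtype.ext (by simpa [hfu] using hmn))⟩

theorem QuotientGroup.injective_mk_comp_iff {G ι : Type*} [Group G] {H : Subgroup G}
    {g : ι → G} :
    Injective (fun n => (g n : G ⧸ H)) ↔ ∀ m n, m ≠ n → (g m)⁻¹ * g n ∉ H :=
  forall₂_congr fun _ _ => by rw [QuotientGroup.eq, not_imp_not]

section SmallSets

variable {M ι : Type*} [TopologicalSpace M] {l : Filter ι} {A : ι → Set M}

theorem eventually_not_meets_both_of_tendsto_smallSets {p : M}
    (hA : Tendsto A l (𝓝 p).smallSets) {K L : Set M} (hK : IsClosed K) (hL : IsClosed L)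
    (hKL : Disjoint K L) :
    ∀ᶠ i in l, ¬((A i ∩ K).Nonempty ∧ (A i ∩ L).Nonempty) := by
  have avoid : ∀ {S : Set M}, IsClosed S → p ∉ S → ∀ᶠ i in l, ¬(A i ∩ S).Nonempty :=
    fun hS hpS => (tendsto_smallSets_iff.mp hA _ (hS.isOpen_compl.mem_nhds hpS)).mono
      fun i hi => Set.not_nonempty_iff_eq_empty.mpr
        (Set.subset_compl_iff_disjoint_right.mp hi).inter_eq
  by_cases hpK : p ∈ K
  · exact (avoid hL (Set.disjoint_left.mp hKL hpK)).mono fun i hi h => hi h.2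
  · exact (avoid hK hpK).mono fun i hi h => hi h.1

theorem tendsto_smallSets_of_eventually_not_meets_both [CompactSpace M] [T2Space M]
    {a : ι → M} {ξ : M} (ha : ∀ i, a i ∈ A i) (haξ : Tendsto a l (𝓝 ξ))
    (hsep : ∀ K L : Set M, IsClosed K → IsClosed L → Disjoint K L →
      ∀ᶠ i in l, ¬((A i ∩ K).Nonempty ∧ (A i ∩ L).Nonempty)) :
    Tendsto A l (𝓝 ξ).smallSets := by
  refine tendsto_smallSets_iff.mpr fun U hU => ?_
  obtain ⟨V, hVU, hVo, hξV⟩ := mem_nhds_iff.mp hU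
  suffices h : ∀ᶠ i in l, Disjoint (A i) Vᶜ from
    h.mono fun i hi => (Set.disjoint_compl_right_iff_subset.mp hi).trans hVU
  refine hVo.isClosed_compl.isCompact.induction_on (p := fun S => ∀ᶠ i in l, Disjoint (A i) S)
    (by simp) (fun S T hST hT => hT.mono fun i hi => hi.mono_right hST)
    (fun S T hS hT => (hS.and hT).mono fun i hi => Set.disjoint_union_right.mpr hi)
    fun q hq => ?_
  obtain ⟨K, ⟨hKξ, hK⟩, L, ⟨hLq, hL⟩, hKL⟩ := (closed_nhds_basis ξ).disjoint_iff
    (closed_nhds_basis q) |>.mp (disjoint_nhds_nhds.mpr fun h => hq (h ▸ hξV))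
  refine ⟨L, mem_nhdsWithin_of_mem_nhds hLq, ?_⟩
  filter_upwards [haξ.eventually_mem hKξ, hsep K L hK hL hKL] with i haK hi
  exact Set.disjoint_iff_inter_eq_empty.mpr
    (Set.not_nonempty_iff_eq_empty.mp fun hAL => hi ⟨⟨a i, ha i, haK⟩, hAL⟩)

end SmallSets

namespace ConvergenceAction

variable {G M : Type*} [Group G] [MetricSpace M] [MulAction G M]

theorem exists_subseq_tendsto_nhds (hconv : ConvergenceAction G M) {γ : ℕ → G}
    (hγ : Injective γ) :
    ∃ σ : ℕ → ℕ, StrictMono σ ∧ ∃ ξ η : M,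
      ∀ x, x ≠ η → Tendsto (fun n => γ (σ n) • x) atTop (𝓝 ξ) := by
  obtain ⟨σ, hσ, ξ, η, huc⟩ := hconv γ hγ
  exact ⟨σ, hσ, ξ, η, fun x hx =>
    (huc {x} isCompact_singleton fun h => hx (Set.mem_singleton_iff.mp h).symm).tendsto_at rfl⟩

theorem exists_subseq_tendsto_smallSets [CompactSpace M] (hconv : ConvergenceAction G M)
    {γ : ℕ → G} (hγ : Injective γ) {Λ : Set M}
    (hsep : ∀ K L : Set M, IsClosed K → IsClosed L → Disjoint K L →
      ∀ᶠ n in atTop, ¬((γ n • Λ ∩ K).Nonempty ∧ (γ n • Λ ∩ L).Nonempty)) :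
    ∃ σ : ℕ → ℕ, StrictMono σ ∧ ∃ p : M, Tendsto (fun n => γ (σ n) • Λ) atTop (𝓝 p).smallSets := by
  obtain ⟨σ, hσ, ξ, η, hξ⟩ := hconv.exists_subseq_tendsto_nhds hγ
  by_cases hΛη : Λ ⊆ {η}
  · obtain ⟨q, -, φ, hφ, hq⟩ :=
      isCompact_univ.tendsto_subseq (x := fun n => γ (σ n) • η) fun _ => trivial
    refine ⟨σ ∘ φ, hσ.comp hφ, q, tendsto_smallSets_iff.mpr fun U hU => ?_⟩
    filter_upwards [hq.eventually_mem hU] with n hn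
    exact (Set.smul_set_mono hΛη).trans (by simpa using hn)
  · obtain ⟨y, hyΛ, hyη⟩ := Set.not_subset.mp hΛη
    exact ⟨σ, hσ, ξ, tendsto_smallSets_of_eventually_not_meets_both
      (fun n => Set.smul_mem_smul_set hyΛ) (hξ y hyη)
      fun K L hK hL hKL => hσ.tendsto_atTop.eventually (hsep K L hK hL hKL)⟩

end ConvergenceAction

theorem dynamically_quasiconvex_iff_cosets_converge_general
    (G M : Type*) [Group G] [MetricSpace M] [CompactSpace M] [MulAction G M]
    (hconv : ConvergenceAction G M)
    (H : Subgroup G) (ΛH : Set M) :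
    (∀ K L : Set M, IsClosed K → IsClosed L → Disjoint K L →
        Set.Finite ((QuotientGroup.mk (s := H)) ''
          {g : G | (g • ΛH ∩ K).Nonempty ∧ (g • ΛH ∩ L).Nonempty})) ↔
    (∀ g : ℕ → G, (∀ m n : ℕ, m ≠ n → (g m)⁻¹ * g n ∉ H) →
        ∃ σ : ℕ → ℕ, StrictMono σ ∧ ∃ p : M,
          ∀ U ∈ nhds p, ∀ᶠ n in atTop, g (σ n) • ΛH ⊆ U) := by
  constructor
  · intro hqc g hg
    have hinj := QuotientGroup.injective_mk_comp_iff.mpr hg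
    obtain ⟨σ, hσ, p, hp⟩ := hconv.exists_subseq_tendsto_smallSets hinj.of_comp
      fun K L hK hL hKL => by
        have hfin := (hqc K L hK hL hKL).eventually_cofinite_notMem
        rw [← Nat.cofinite_eq_atTop]
        exact (hinj.tendsto_cofinite.eventually hfin).mono fun n hn hmeets => hn ⟨g n, hmeets, rfl⟩
    exact ⟨σ, hσ, p, tendsto_smallSets_iff.mp hp⟩
  · intro hcosets K L hK hL hKL
    by_contra hinf
    obtain ⟨g, hgT, hinj⟩ := Set.Infinite.exists_seq_mem_injective_comp hinf
    obtain ⟨σ, -, p, hp⟩ := hcosets g (QuotientGroup.injective_mk_comp_iff.mp hinj)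
    obtain ⟨n, hn⟩ := (eventually_not_meets_both_of_tendsto_smallSets
      (tendsto_smallSets_iff.mpr hp) hK hL hKL).exists
    exact hn (hgT (σ n))

/-- A subgroup `H` with limit set `ΛH` is dynamically quasi-convex iff for every sequence
lying in pairwise distinct left cosets of `H` there is a subsequence whose translates of
`ΛH` converge uniformly to a single point. -/
theorem dynamically_quasiconvex_iff_cosets_converge
    (G M : Type*) [Group G] [MetricSpace M] [CompactSpace M] [MulAction G M]
    (hconv : ConvergenceAction G M)
    (H : Subgroup G) (ΛH : Set M) (hΛ : IsLimitSet M H ΛH) :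
    (∀ K L : Set M, IsClosed K → IsClosed L → Disjoint K L →
        Set.Finite ((QuotientGroup.mk (s := H)) ''
          {g : G | (g • ΛH ∩ K).Nonempty ∧ (g • ΛH ∩ L).Nonempty})) ↔
    (∀ g : ℕ → G, (∀ m n : ℕ, m ≠ n → (g m)⁻¹ * g n ∉ H) →
        ∃ σ : ℕ → ℕ, StrictMono σ ∧ ∃ p : M,
          ∀ U ∈ nhds p, ∀ᶠ n in atTop, g (σ n) • ΛH ⊆ U) :=
  dynamically_quasiconvex_iff_cosets_converge_general G M hconv H ΛH
end

section
/- Let Γ = G₁ *_P G₂ be an amalgamated product where P is a common subgroup, and suppose P ⊆ P₁ ⊆ G₁ and P ⊆ P₂ ⊆ G₂ with P of possibly infinite index in P₁ and P₂. In the Bass–Serre tree T of Γ, the set of vertices fixed-stabilized through the subgroup Q = P₁ *_P P₂ — namely the domain D of the edge point — is a Q-invariant subtree which is Q-equivariantly isomorphic to the Bass–Serre tree of the splitting Q = P₁ *_P P₂, and Q acts on D with quotient a single edge. -/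
open Pointwise

/-- The Bass–Serre graph of `Γ` relative to two subgroups `A`, `B`: vertex set
`Γ/A ⊔ Γ/B`, with `γA` adjacent to `γB`.  When `Γ = A *_{A ⊓ B} B`, this is the
Bass–Serre tree of the splitting. -/
def BassSerreGraph (Γ : Type*) [Group Γ] (A B : Subgroup Γ) :
    SimpleGraph ((Γ ⧸ A) ⊕ (Γ ⧸ B)) where
  Adj u v := ∃ γ : Γ,
    (u = Sum.inl (QuotientGroup.mk γ) ∧ v = Sum.inr (QuotientGroup.mk γ)) ∨
    (v = Sum.inl (QuotientGroup.mk γ) ∧ u = Sum.inr (QuotientGroup.mk γ))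
  symm := ⟨by rintro u v ⟨γ, h | h⟩ <;> exact ⟨γ, by tauto⟩⟩
  loopless := ⟨by rintro u ⟨γ, ⟨h1, h2⟩ | ⟨h1, h2⟩⟩ <;> simp [h1] at h2⟩

/-- The action of `Γ` on the vertices of its Bass–Serre graph. -/
def bsSmul {Γ : Type*} [Group Γ] {A B : Subgroup Γ} (γ : Γ) :
    (Γ ⧸ A) ⊕ (Γ ⧸ B) → (Γ ⧸ A) ⊕ (Γ ⧸ B) :=
  Sum.map (fun x => γ • x) (fun y => γ • y)

def IsSubtree {V : Type*} (T : SimpleGraph V) (A : Set V) : Prop :=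
  A.Nonempty ∧ ∀ a ∈ A, ∀ b ∈ A, ∃ p : T.Walk a b, ∀ x ∈ p.support, x ∈ A

/-!
The inclusion `Q → Γ` induces a `Q`-equivariant graph map `φ` from the Bass–Serre graph of
`(Q, P₁, P₂)` to that of `(Γ, G₁, G₂)`, whose image is `D`. The source is connected because `Q`
is generated by `P₁ ∪ P₂`. The map `φ` is locally injective: two edges at `qP₁` with the same
image differ by an element of `P₁ ∩ G₂ ⊆ G₁ ∩ G₂ = P ⊆ P₂`, and symmetrically at `qP₂`. Hence
`φ` sends paths to walks without backtracking, which in a tree are paths. Uniqueness of paths in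
the tree then makes `φ` injective and makes it reflect adjacency, so it identifies the source
graph with `D`.
-/

namespace SimpleGraph

variable {V W : Type*} {G : SimpleGraph V} {H : SimpleGraph W}

def Hom.LocallyInjective (f : G →g H) : Prop := ∀ v, (G.neighborSet v).InjOn f

namespace Hom.LocallyInjective

variable {f : G →g H}

theorem isPath_map (hf : f.LocallyInjective) (hH : H.IsAcyclic) {u v : V} {p : G.Walk u v}
    (hp : p.IsPath) : (p.map f).IsPath := by
  induction p with
  | nil => simp
  | @cons u v w h q ih =>
    rw [Walk.cons_isPath_iff] at hp
    rw [Walk.map_cons, Walk.cons_isPath_iff]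
    refine ⟨ih hp.1, fun hmem => ?_⟩
    have hsnd := hH.eq_snd_of_adj_start (ih hp.1) (f.map_adj h).symm hmem
    cases q with
    | nil => exact (f.map_adj h).ne (by simpa using hmem)
    | @cons _ x _ h' q' =>
      rw [Walk.map_cons, Walk.snd_cons] at hsnd
      have hux : u = x := hf v h.symm h' hsnd
      exact hp.2 (by simp [hux])

theorem injective (hf : f.LocallyInjective) (hG : G.Connected) (hH : H.IsAcyclic) :
    Function.Injective f := by
  intro u v huv
  obtain ⟨p, hp⟩ := (hG u v).exists_isPath
  have hloop : ((p.map f).copy rfl huv.symm).IsPath :=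
    (Walk.isPath_copy _ _ _).mpr (hf.isPath_map hH hp)
  have hlen := Walk.length_eq_zero_iff.mpr (Walk.isPath_iff_nil.mp hloop)
  rw [Walk.length_copy, Walk.length_map] at hlen
  exact Walk.eq_of_length_eq_zero hlen

theorem map_adj_iff (hf : f.LocallyInjective) (hG : G.Connected) (hH : H.IsAcyclic) {u v : V} :
    H.Adj (f u) (f v) ↔ G.Adj u v := by
  refine ⟨fun h => ?_, f.map_adj⟩
  obtain ⟨p, hp⟩ := (hG u v).exists_isPath
  have hedge := (hH.subsingleton_path _ _).elim ⟨p.map f, hf.isPath_map hH hp⟩ (Path.singleton h)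
  have hlen := congrArg (fun q : H.Path (f u) (f v) => q.1.length) hedge
  simp only [Path.singleton_coe, Walk.length_map, Walk.length_cons, Walk.length_nil] at hlen
  exact Walk.adj_of_length_eq_one hlen

end Hom.LocallyInjective

end SimpleGraph

theorem isSubtree_range_of_connected {V W : Type*} {G : SimpleGraph V} {H : SimpleGraph W}
    (hG : G.Connected) (f : G →g H) : IsSubtree H (Set.range f) := by
  have := hG.nonempty
  refine ⟨Set.range_nonempty f, ?_⟩
  rintro _ ⟨u, rfl⟩ _ ⟨v, rfl⟩
  refine ⟨(hG u v).some.map f, fun x hx => ?_⟩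
  obtain ⟨w, -, rfl⟩ := List.mem_map.mp ((SimpleGraph.Walk.support_map _ _) ▸ hx)
  exact ⟨w, rfl⟩

namespace BassSerreGraph

open SimpleGraph

variable {Γ Λ : Type*} [Group Γ] [Group Λ] {A B : Subgroup Γ}

@[simp]
theorem bsSmul_inl (γ δ : Γ) :
    bsSmul (A := A) (B := B) γ (Sum.inl (δ : Γ ⧸ A)) = Sum.inl ((γ * δ : Γ) : Γ ⧸ A) :=
  rfl

@[simp]
theorem bsSmul_inr (γ δ : Γ) :
    bsSmul (A := A) (B := B) γ (Sum.inr (δ : Γ ⧸ B)) = Sum.inr ((γ * δ : Γ) : Γ ⧸ B) :=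
  rfl

theorem adj_inl_inr (γ : Γ) :
    (BassSerreGraph Γ A B).Adj (Sum.inl (γ : Γ ⧸ A)) (Sum.inr (γ : Γ ⧸ B)) :=
  ⟨γ, Or.inl ⟨rfl, rfl⟩⟩

theorem exists_of_adj_inl {a : Γ ⧸ A} {w : (Γ ⧸ A) ⊕ (Γ ⧸ B)}
    (h : (BassSerreGraph Γ A B).Adj (Sum.inl a) w) : ∃ γ : Γ, a = γ ∧ w = Sum.inr (γ : Γ ⧸ B) := by
  obtain ⟨γ, ⟨ha, rfl⟩ | ⟨-, ha⟩⟩ := h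
  · exact ⟨γ, Sum.inl_injective ha, rfl⟩
  · exact absurd ha Sum.inl_ne_inr

theorem exists_of_adj_inr {b : Γ ⧸ B} {w : (Γ ⧸ A) ⊕ (Γ ⧸ B)}
    (h : (BassSerreGraph Γ A B).Adj (Sum.inr b) w) : ∃ γ : Γ, b = γ ∧ w = Sum.inl (γ : Γ ⧸ A) := by
  obtain ⟨γ, ⟨ha, -⟩ | ⟨rfl, ha⟩⟩ := h
  · exact absurd ha Sum.inr_ne_inl
  · exact ⟨γ, Sum.inr_injective ha, rfl⟩

def smulHom (γ : Γ) : BassSerreGraph Γ A B →g BassSerreGraph Γ A B where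
  toFun := bsSmul γ
  map_rel' := by
    rintro _ _ ⟨δ, ⟨rfl, rfl⟩ | ⟨rfl, rfl⟩⟩
    · exact ⟨γ * δ, Or.inl ⟨rfl, rfl⟩⟩
    · exact ⟨γ * δ, Or.inr ⟨rfl, rfl⟩⟩

@[simp]
theorem smulHom_apply (γ : Γ) (u : (Γ ⧸ A) ⊕ (Γ ⧸ B)) : smulHom γ u = bsSmul γ u :=
  rfl

theorem reachable_of_mem_closure {γ : Γ} (hγ : γ ∈ Subgroup.closure ((A : Set Γ) ∪ B)) :
    (BassSerreGraph Γ A B).Reachable (Sum.inl ((1 : Γ) : Γ ⧸ A)) (Sum.inl (γ : Γ ⧸ A)) := by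
  induction hγ using Subgroup.closure_induction with
  | mem x hx =>
    rcases hx with hx | hx
    · rw [QuotientGroup.eq.mpr (by simpa using hx : (1 : Γ)⁻¹ * x ∈ A)]
    · have hB : ((1 : Γ) : Γ ⧸ B) = x := QuotientGroup.eq.mpr (by simpa using hx)
      exact (adj_inl_inr 1).reachable.trans (hB ▸ (adj_inl_inr x).symm.reachable)
  | one => rfl
  | mul x y _ _ hx hy => exact hx.trans (by simpa using hy.map (smulHom x))
  | inv x _ hx => exact (by simpa using hx.map (smulHom x⁻¹) : Reachable _ _ _).symm

theorem connected_of_closure_eq_top (h : Subgroup.closure ((A : Set Γ) ∪ B) = ⊤) :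
    (BassSerreGraph Γ A B).Connected := by
  have hroot (γ : Γ) := reachable_of_mem_closure (h ▸ Subgroup.mem_top γ : γ ∈ _)
  refine (connected_iff_exists_forall_reachable _).mpr ⟨Sum.inl ((1 : Γ) : Γ ⧸ A), ?_⟩
  rintro (a | b)
  · induction a using QuotientGroup.induction_on with | H γ => exact hroot γ
  · induction b using QuotientGroup.induction_on with
    | H γ => exact (hroot γ).trans (adj_inl_inr γ).reachable

variable {A' B' : Subgroup Λ} (f : Γ →* Λ) (hA : A ≤ A'.comap f) (hB : B ≤ B'.comap f)

def map : BassSerreGraph Γ A B →g BassSerreGraph Λ A' B' where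
  toFun := Sum.map
    (Quotient.map' f fun _ _ h => QuotientGroup.leftRel_apply.mpr
      (by simpa using hA (QuotientGroup.leftRel_apply.mp h)))
    (Quotient.map' f fun _ _ h => QuotientGroup.leftRel_apply.mpr
      (by simpa using hB (QuotientGroup.leftRel_apply.mp h)))
  map_rel' := by
    rintro _ _ ⟨γ, ⟨rfl, rfl⟩ | ⟨rfl, rfl⟩⟩
    · exact ⟨f γ, Or.inl ⟨rfl, rfl⟩⟩
    · exact ⟨f γ, Or.inr ⟨rfl, rfl⟩⟩

@[simp]
theorem map_inl (γ : Γ) : map f hA hB (Sum.inl (γ : Γ ⧸ A)) = Sum.inl (f γ : Λ ⧸ A') :=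
  rfl

@[simp]
theorem map_inr (γ : Γ) : map f hA hB (Sum.inr (γ : Γ ⧸ B)) = Sum.inr (f γ : Λ ⧸ B') :=
  rfl

theorem map_bsSmul (γ : Γ) (u : (Γ ⧸ A) ⊕ (Γ ⧸ B)) :
    map f hA hB (bsSmul γ u) = bsSmul (f γ) (map f hA hB u) := by
  rcases u with a | b
  · induction a using QuotientGroup.induction_on with | H δ => simp
  · induction b using QuotientGroup.induction_on with | H δ => simp

theorem range_map : Set.range (map f hA hB) =
    {w | ∃ γ : Γ, w = Sum.inl (f γ : Λ ⧸ A') ∨ w = Sum.inr (f γ : Λ ⧸ B')} := by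
  ext w
  constructor
  · rintro ⟨a | b, rfl⟩
    · induction a using QuotientGroup.induction_on with | H γ => exact ⟨γ, Or.inl rfl⟩
    · induction b using QuotientGroup.induction_on with | H γ => exact ⟨γ, Or.inr rfl⟩
  · rintro ⟨γ, rfl | rfl⟩
    exacts [⟨Sum.inl γ, rfl⟩, ⟨Sum.inr γ, rfl⟩]

theorem locallyInjective_map (hAB : A ⊓ B'.comap f ≤ B) (hBA : B ⊓ A'.comap f ≤ A) :
    (map f hA hB).LocallyInjective := by
  rintro (a | b) w₁ hw₁ w₂ hw₂ hw
  · obtain ⟨γ₁, rfl, rfl⟩ := exists_of_adj_inl hw₁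
    obtain ⟨γ₂, hγ, rfl⟩ := exists_of_adj_inl hw₂
    simp only [map_inr, Sum.inr.injEq, QuotientGroup.eq] at hw
    exact congrArg Sum.inr (QuotientGroup.eq.mpr
      (hAB ⟨QuotientGroup.eq.mp hγ, by simpa using hw⟩))
  · obtain ⟨γ₁, rfl, rfl⟩ := exists_of_adj_inr hw₁
    obtain ⟨γ₂, hγ, rfl⟩ := exists_of_adj_inr hw₂
    simp only [map_inl, Sum.inl.injEq, QuotientGroup.eq] at hw
    exact congrArg Sum.inl (QuotientGroup.eq.mpr
      (hBA ⟨QuotientGroup.eq.mp hγ, by simpa using hw⟩))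

end BassSerreGraph

theorem domain_is_bass_serre_tree_of_parabolic_amalgam_general
    (Γ : Type*) [Group Γ] (G₁ G₂ P P₁ P₂ : Subgroup Γ)
    (hP : G₁ ⊓ G₂ = P) (hPP₁ : P ≤ P₁) (hP₁ : P₁ ≤ G₁) (hPP₂ : P ≤ P₂) (hP₂ : P₂ ≤ G₂)
    (htree : (BassSerreGraph Γ G₁ G₂).IsTree) :
    let Q : Subgroup Γ := Subgroup.closure ((P₁ : Set Γ) ∪ P₂)
    let D : Set ((Γ ⧸ G₁) ⊕ (Γ ⧸ G₂)) :=
      {w | ∃ q ∈ Q, w = Sum.inl (QuotientGroup.mk q) ∨ w = Sum.inr (QuotientGroup.mk q)}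
    (∀ q ∈ Q, ∀ w ∈ D, bsSmul q w ∈ D) ∧
    IsSubtree (BassSerreGraph Γ G₁ G₂) D ∧
    (∃ e : ((Q ⧸ P₁.subgroupOf Q) ⊕ (Q ⧸ P₂.subgroupOf Q)) ≃ D,
      (∀ u v, (BassSerreGraph Q (P₁.subgroupOf Q) (P₂.subgroupOf Q)).Adj u v ↔
        (BassSerreGraph Γ G₁ G₂).Adj (e u : (Γ ⧸ G₁) ⊕ (Γ ⧸ G₂)) (e v)) ∧
      (∀ (q : Q) (u : (Q ⧸ P₁.subgroupOf Q) ⊕ (Q ⧸ P₂.subgroupOf Q)),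
        (e (bsSmul q u) : (Γ ⧸ G₁) ⊕ (Γ ⧸ G₂)) = bsSmul (q : Γ) (e u))) ∧
    (∀ w ∈ D, (∃ q ∈ Q, bsSmul q w = Sum.inl (QuotientGroup.mk 1)) ∨
      (∃ q ∈ Q, bsSmul q w = Sum.inr (QuotientGroup.mk 1))) := by
  intro Q D
  have hG₁ : P₁.subgroupOf Q ≤ G₁.comap Q.subtype := Subgroup.comap_mono hP₁
  have hG₂ : P₂.subgroupOf Q ≤ G₂.comap Q.subtype := Subgroup.comap_mono hP₂
  let φ := BassSerreGraph.map Q.subtype hG₁ hG₂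
  have hconn : (BassSerreGraph Q (P₁.subgroupOf Q) (P₂.subgroupOf Q)).Connected := by
    refine BassSerreGraph.connected_of_closure_eq_top ?_
    rw [Subgroup.coe_subgroupOf, Subgroup.coe_subgroupOf, ← Set.preimage_union]
    exact Subgroup.closure_closure_coe_preimage
  have h₁₂ : P₁ ⊓ G₂ ≤ P₂ := (inf_le_inf_right G₂ hP₁).trans (hP.trans_le hPP₂)
  have h₂₁ : P₂ ⊓ G₁ ≤ P₁ :=
    (inf_comm P₂ G₁).trans_le ((inf_le_inf_left G₁ hP₂).trans (hP.trans_le hPP₁))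
  have hloc : φ.LocallyInjective :=
    BassSerreGraph.locallyInjective_map _ _ _ (fun _ hx => h₁₂ hx) (fun _ hx => h₂₁ hx)
  have hrange : Set.range φ = D := by
    rw [BassSerreGraph.range_map]
    ext w
    simp [D]
  refine ⟨?_, hrange ▸ isSubtree_range_of_connected hconn φ,
    ⟨(Equiv.ofInjective φ (hloc.injective hconn htree.isAcyclic)).trans (Equiv.setCongr hrange),
      fun u v => (hloc.map_adj_iff hconn htree.isAcyclic).symm,
      fun q u => BassSerreGraph.map_bsSmul _ hG₁ hG₂ q u⟩, ?_⟩
  · rintro q hq w ⟨x, hx, rfl | rfl⟩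
    exacts [⟨q * x, mul_mem hq hx, Or.inl rfl⟩, ⟨q * x, mul_mem hq hx, Or.inr rfl⟩]
  · rintro w ⟨x, hx, rfl | rfl⟩
    exacts [Or.inl ⟨x⁻¹, inv_mem hx, by simp⟩, Or.inr ⟨x⁻¹, inv_mem hx, by simp⟩]

/-- For an amalgam `Γ = G₁ *_P G₂` with `P ≤ P₁ ≤ G₁`, `P ≤ P₂ ≤ G₂`, the domain
`D` of the edge point — the set of vertices of the Bass–Serre tree of `Γ` in the orbit
of the subgroup `Q = P₁ *_P P₂` — is a `Q`-invariant subtree, `Q`-equivariantly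
isomorphic to the Bass–Serre tree of the splitting `Q = P₁ *_P P₂`, and `Q` acts on `D`
with quotient a single edge. -/
theorem domain_is_bass_serre_tree_of_parabolic_amalgam
    (Γ : Type*) [Group Γ] (G₁ G₂ P P₁ P₂ : Subgroup Γ)
    (hP : G₁ ⊓ G₂ = P) (hPP₁ : P ≤ P₁) (hP₁ : P₁ ≤ G₁) (hPP₂ : P ≤ P₂) (hP₂ : P₂ ≤ G₂)
    (hgen : Subgroup.closure ((G₁ : Set Γ) ∪ G₂) = ⊤)
    (htree : (BassSerreGraph Γ G₁ G₂).IsTree) :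
    let Q : Subgroup Γ := Subgroup.closure ((P₁ : Set Γ) ∪ P₂)
    let D : Set ((Γ ⧸ G₁) ⊕ (Γ ⧸ G₂)) :=
      {w | ∃ q ∈ Q, w = Sum.inl (QuotientGroup.mk q) ∨ w = Sum.inr (QuotientGroup.mk q)}
    (∀ q ∈ Q, ∀ w ∈ D, bsSmul q w ∈ D) ∧
    IsSubtree (BassSerreGraph Γ G₁ G₂) D ∧
    (∃ e : ((Q ⧸ P₁.subgroupOf Q) ⊕ (Q ⧸ P₂.subgroupOf Q)) ≃ D,
      (∀ u v, (BassSerreGraph Q (P₁.subgroupOf Q) (P₂.subgroupOf Q)).Adj u v ↔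
        (BassSerreGraph Γ G₁ G₂).Adj (e u : (Γ ⧸ G₁) ⊕ (Γ ⧸ G₂)) (e v)) ∧
      (∀ (q : Q) (u : (Q ⧸ P₁.subgroupOf Q) ⊕ (Q ⧸ P₂.subgroupOf Q)),
        (e (bsSmul q u) : (Γ ⧸ G₁) ⊕ (Γ ⧸ G₂)) = bsSmul (q : Γ) (e u))) ∧
    (∀ w ∈ D, (∃ q ∈ Q, bsSmul q w = Sum.inl (QuotientGroup.mk 1)) ∨
      (∃ q ∈ Q, bsSmul q w = Sum.inr (QuotientGroup.mk 1))) :=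
  domain_is_bass_serre_tree_of_parabolic_amalgam_general Γ G₁ G₂ P P₁ P₂ hP hPP₁ hP₁ hPP₂ hP₂ htree
end
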